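/- arXiv:2505.03953 — 2 statements merged into one kernel-verified Lean document; each statement's English description precedes it below -/
import Mathlib

section
/- Let X ⊂ ℝ^m be compact with nonempty interior, f : C × X → ℝ continuous, and g : X → ℝ continuous and convex, where g(x) = E[f(c,x)]. If for every c ∈ C the function f(c,·) is strictly coordinate-wise monotonic (for each coordinate i and each fixing of the other coordinates, x_i ↦ f(c, x) is strictly monotone), and g is coordinate-wise non-monotonic in the sense that its minimizer lies in the interior of X, then the minimizer of f(c,·) over X lies on the boundary ∂X for every c ∈ C, while the minimizer of g lies in the interior; consequently min_x g(x) < inf_{ĉ∈C} g(xD(ĉ)) where xD(ĉ) minimizes f(ĉ,·). (V* < V_DFL.) -/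
/-!
At an interior point `y` of `X`, every coordinate line through `y` stays in `X` near `y`, so a
minimiser of `f c` over `X` would give a local minimum of a strictly monotone one-variable slice,
which is impossible. Hence all the values `g (xD ĉ)` are values of `g` on the compact frontier
of `X`, where the continuous `g` attains a minimum; that minimum is strictly above `g xstar`
because `xstar` is interior, hence not on the frontier, and is the unique minimiser of `g`.
-/

open Filter Set Topology

section StrictSlice

variable {α β : Type*} [LinearOrder α] [TopologicalSpace α] [OrderTopology α] [DenselyOrdered α]
  [Preorder β] {f : α → β} {a : α}

theorem StrictMono.not_isLocalMin [NoMinOrder α] (hf : StrictMono f) : ¬IsLocalMin f a := by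
  intro hmin
  obtain ⟨x, hle, hxa⟩ :=
    ((hmin.filter_mono nhdsWithin_le_nhds).and (self_mem_nhdsWithin : Iio a ∈ 𝓝[<] a)).exists
  exact (hf hxa).not_ge hle

theorem StrictAnti.not_isLocalMin [NoMaxOrder α] (hf : StrictAnti f) : ¬IsLocalMin f a := by
  intro hmin
  obtain ⟨x, hle, hax⟩ :=
    ((hmin.filter_mono nhdsWithin_le_nhds).and (self_mem_nhdsWithin : Ioi a ∈ 𝓝[>] a)).exists
  exact (hf hax).not_ge hle

end StrictSlice

theorem IsMinOn.isLocalMin_update {ι β : Type*} [DecidableEq ι] [Preorder β]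
    {X : Set (ι → ℝ)} {φ : (ι → ℝ) → β} {y : ι → ℝ} (hmin : IsMinOn φ X y)
    (hy : y ∈ interior X) (i : ι) : IsLocalMin (fun t : ℝ => φ (Function.update y i t)) (y i) := by
  have hlocal : IsLocalMin φ (Function.update y i (y i)) := by
    rw [Function.update_eq_self]
    exact hmin.isLocalMin (mem_interior_iff_mem_nhds.mp hy)
  exact hlocal.comp_continuous (continuous_const.update i continuous_id).continuousAt

theorem IsMinOn.mem_frontier_of_strictMono_or_strictAnti_update {ι β : Type*} [DecidableEq ι]
    [Preorder β] {X : Set (ι → ℝ)} {φ : (ι → ℝ) → β} {y : ι → ℝ} (hmin : IsMinOn φ X y)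
    (hy : y ∈ X) (i : ι)
    (hslice : StrictMono (fun t : ℝ => φ (Function.update y i t)) ∨
      StrictAnti (fun t : ℝ => φ (Function.update y i t))) :
    y ∈ frontier X := by
  refine ⟨subset_closure hy, fun hyint => ?_⟩
  have hlocal := hmin.isLocalMin_update hyint i
  rcases hslice with hmono | hanti
  exacts [hmono.not_isLocalMin hlocal, hanti.not_isLocalMin hlocal]

theorem IsCompact.lt_csInf_of_forall_lt {α : Type*} [TopologicalSpace α] {K : Set α}
    (hK : IsCompact K) {g : α → ℝ} (hg : ContinuousOn g K) {b : ℝ} (hb : ∀ x ∈ K, b < g x)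
    {S : Set ℝ} (hS : S.Nonempty) (hSK : S ⊆ g '' K) : b < sInf S := by
  obtain ⟨x, hxK, -⟩ := hSK hS.some_mem
  obtain ⟨z, hzK, hzmin⟩ := hK.exists_isMinOn ⟨x, hxK⟩ hg
  refine (hb z hzK).trans_le (le_csInf hS ?_)
  rintro _ hv
  obtain ⟨w, hwK, rfl⟩ := hSK hv
  exact hzmin hwK

theorem boundary_vs_interior_vstar_lt_vdfl_general
    {m : ℕ} (hm : 0 < m) {C : Type*} [Nonempty C]
    (X : Set (Fin m → ℝ)) (hX : IsCompact X)
    (f : C → (Fin m → ℝ) → ℝ)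
    (g : (Fin m → ℝ) → ℝ) (hgc : Continuous g)
    (hmono : ∀ (c : C) (x : Fin m → ℝ) (i : Fin m),
      StrictMono (fun t : ℝ => f c (Function.update x i t)) ∨
      StrictAnti (fun t : ℝ => f c (Function.update x i t)))
    (xstar : Fin m → ℝ) (hstar_int : xstar ∈ interior X)
    (hstar_uniq : ∀ x ∈ X, x ≠ xstar → g xstar < g x)
    (xD : C → (Fin m → ℝ)) (hxD : ∀ c : C, xD c ∈ X ∧ ∀ x ∈ X, f c (xD c) ≤ f c x) :
    (∀ (c : C), ∀ y ∈ X, (∀ x ∈ X, f c y ≤ f c x) → y ∈ frontier X) ∧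
      g xstar < sInf {v : ℝ | ∃ chat : C, v = g (xD chat)} := by
  have hboundary : ∀ (c : C), ∀ y ∈ X, (∀ x ∈ X, f c y ≤ f c x) → y ∈ frontier X :=
    fun c y hy hmin =>
      (isMinOn_iff.mpr hmin).mem_frontier_of_strictMono_or_strictAnti_update hy ⟨0, hm⟩
        (hmono c y ⟨0, hm⟩)
  refine ⟨hboundary, ?_⟩
  have hfrontier_sub : frontier X ⊆ X := hX.isClosed.frontier_subset
  refine (hX.of_isClosed_subset isClosed_frontier hfrontier_sub).lt_csInf_of_forall_lt
    hgc.continuousOn (fun x hx => ?_) ?_ ?_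
  · exact hstar_uniq x (hfrontier_sub hx) (ne_of_mem_of_not_mem hx fun h => h.2 hstar_int)
  · obtain ⟨c⟩ := ‹Nonempty C›
    exact ⟨g (xD c), c, rfl⟩
  · rintro _ ⟨c, rfl⟩
    exact ⟨xD c, hboundary c (xD c) (hxD c).1 (hxD c).2, rfl⟩

/-- On a compact `X ⊆ ℝ^m` with nonempty interior, if every scenario
objective `f c` is continuous and strictly coordinate-wise monotonic, and the (convex,
continuous) expected objective `g` has its (unique) minimizer `xstar` in the interior of
`X`, then every minimizer of `f c` over `X` lies on the frontier of `X`, while the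
minimizer of `g` is interior; consequently V* = g xstar < V_DFL = inf over predicted
scenarios of the deterministic-proxy value. -/
theorem boundary_vs_interior_vstar_lt_vdfl
    {m : ℕ} (hm : 0 < m) {C : Type*} [Nonempty C]
    (X : Set (Fin m → ℝ)) (hX : IsCompact X) (hint : (interior X).Nonempty)
    (f : C → (Fin m → ℝ) → ℝ) (hfc : ∀ c : C, Continuous (f c))
    (g : (Fin m → ℝ) → ℝ) (hgc : Continuous g) (hgconv : ConvexOn ℝ X g)
    (hmono : ∀ (c : C) (x : Fin m → ℝ) (i : Fin m),
      StrictMono (fun t : ℝ => f c (Function.update x i t)) ∨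
      StrictAnti (fun t : ℝ => f c (Function.update x i t)))
    (xstar : Fin m → ℝ) (hstar_int : xstar ∈ interior X)
    (hstar_min : ∀ x ∈ X, g xstar ≤ g x)
    (hstar_uniq : ∀ x ∈ X, x ≠ xstar → g xstar < g x)
    (xD : C → (Fin m → ℝ)) (hxD : ∀ c : C, xD c ∈ X ∧ ∀ x ∈ X, f c (xD c) ≤ f c x) :
    (∀ (c : C), ∀ y ∈ X, (∀ x ∈ X, f c y ≤ f c x) → y ∈ frontier X) ∧
      g xstar < sInf {v : ℝ | ∃ chat : C, v = g (xD chat)} :=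
  boundary_vs_interior_vstar_lt_vdfl_general hm X hX f g hgc hmono xstar hstar_int hstar_uniq xD hxD
end

section
/- Let X be a finite decision set, C a scenario set, and suppose x* ∈ X is NOT scenario-wise dominated, i.e., there exists c₀ ∈ C such that f(c₀, x*) ≤ f(c₀, x) for all x ∈ X. Then x* is in the image of some minimizer-selection xD : C → X (one can choose xD(c₀) = x*), and hence if additionally x* minimizes g, then V_DFL = V*: absence of scenario-wise dominance of the true optimum implies the deterministic proxy can be optimal. -/
/-!
Fixing a minimizer in every scenario, we may pick `xstar` in the scenario `c₀` where it is
optimal. Then `xstar` lies in the range of the selection, so when `xstar` also minimizes `g`,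
the infimum of `g` along the selection is attained at `c₀` and equals the unconstrained one.
-/

open Set

theorem exists_minimizer_selection_eq {C X α : Type*} [LinearOrder α] (f : C → X → α)
    (hmin : ∀ c, ∃ x, ∀ y, f c x ≤ f c y) {c₀ : C} {xstar : X}
    (hc₀ : ∀ x, f c₀ xstar ≤ f c₀ x) :
    ∃ xD : C → X, (∀ c x, f c (xD c) ≤ f c x) ∧ xD c₀ = xstar := by
  classical
  choose xmin hxmin using hmin
  refine ⟨Function.update xmin c₀ xstar, fun c x => ?_, Function.update_self ..⟩
  obtain rfl | hc := eq_or_ne c c₀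
  · simpa only [Function.update_self] using hc₀ x
  · simpa only [Function.update_of_ne hc] using hxmin c x

theorem ciInf_eq_of_forall_le {ι α : Type*} [ConditionallyCompleteLinearOrder α] {f : ι → α}
    {i₀ : ι} (h : ∀ i, f i₀ ≤ f i) : ⨅ i, f i = f i₀ :=
  have : Nonempty ι := ⟨i₀⟩
  IsLeast.isGLB ⟨mem_range_self i₀, forall_mem_range.2 h⟩ |>.ciInf_eq

theorem ciInf_comp_eq_ciInf_of_forall_le {ι X α : Type*} [ConditionallyCompleteLinearOrder α]
    {g : X → α} {φ : ι → X} {i₀ : ι} (h : ∀ x, g (φ i₀) ≤ g x) :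
    ⨅ i, g (φ i) = ⨅ x, g x := by
  rw [ciInf_eq_of_forall_le (f := fun i => g (φ i)) (i₀ := i₀) fun i => h (φ i),
    ciInf_eq_of_forall_le h]

theorem not_dominated_proxy_optimal_general {X C : Type*} [Fintype X]
    (f : C → X → ℝ) (g : X → ℝ)
    (xstar : X) (c₀ : C) (hc₀ : ∀ x : X, f c₀ xstar ≤ f c₀ x) :
    ∃ xD : C → X,
      (∀ (c : C) (x : X), f c (xD c) ≤ f c x) ∧
      xD c₀ = xstar ∧
      ((∀ x : X, g xstar ≤ g x) → (⨅ chat : C, g (xD chat)) = ⨅ x : X, g x) := by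
  have : Nonempty X := ⟨xstar⟩
  obtain ⟨xD, hsel, hxD⟩ :=
    exists_minimizer_selection_eq f (fun c => Finite.exists_min (f c)) hc₀
  exact ⟨xD, hsel, hxD, fun hg => ciInf_comp_eq_ciInf_of_forall_le (i₀ := c₀) (hxD ▸ hg)⟩

/-- If `xstar` is NOT scenario-wise dominated, i.e. there is a scenario `c₀`
where `xstar` minimizes `f c₀`, then (on a finite decision set) there is a
minimizer-selection `xD` with `xD c₀ = xstar`; hence if moreover `xstar` minimizes the
expected objective `g`, the deterministic proxy attains the true optimum:
`⨅ chat, g (xD chat) = ⨅ x, g x` (V_DFL = V*). -/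
theorem not_dominated_proxy_optimal {X C : Type*} [Fintype X] [Nonempty X]
    (f : C → X → ℝ) (g : X → ℝ)
    (xstar : X) (c₀ : C) (hc₀ : ∀ x : X, f c₀ xstar ≤ f c₀ x) :
    ∃ xD : C → X,
      (∀ (c : C) (x : X), f c (xD c) ≤ f c x) ∧
      xD c₀ = xstar ∧
      ((∀ x : X, g xstar ≤ g x) → (⨅ chat : C, g (xD chat)) = ⨅ x : X, g x) :=
  not_dominated_proxy_optimal_general f g xstar c₀ hc₀
end
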